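/- arXiv:1812.02149 — 4 statements merged into one kernel-verified Lean document; each statement's English description precedes it below -/
import Mathlib

section
/- Two-observation decomposition of the PR estimate: for two observations Y_1 and Y_2, assume f_0(Y_1) > 0, f_1(Y_2) > 0, and m := Integral k(Y_1|u) k(Y_2|u) p_0(u) nu(du) is finite, where f_0 = f_{p_0} and f_1 = f_{p_1}. Define the one- and two-observation Bayes updates p_0(u|Y_i) = k(Y_i|u) p_0(u) / f_0(Y_i) and p_0(u|Y_1,Y_2) = k(Y_1|u) k(Y_2|u) p_0(u) / m. Then the PR estimate after two steps satisfies, for all u, p_2(u) = a_0 p_0(u) + a_1 p_0(u|Y_1) + a_2 p_0(u|Y_2) + a_{12} p_0(u|Y_1,Y_2), with coefficients a_0 = (1-w_1)(1-w_2), a_1 = w_1(1-w_2), a_2 = w_2 (1-w_1) f_0(Y_2) / f_1(Y_2), and a_{12} = w_1 w_2 m / (f_0(Y_1) f_1(Y_2)); moreover these coefficients are nonnegative and a_0 + a_1 + a_2 + a_{12} = 1. -/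
open MeasureTheory Filter Topology ENNReal
open scoped Classical

/-- The predictive recursion (PR) algorithm: given kernel `k`, dominating measure `ν` on the
mixing space, weights `w`, initial guess `p0` and a data sequence `Y` (indexed from `1`),
`prSeq k ν w p0 Y n` is the PR estimate `p_n` of the mixing density after processing
`Y 1, ..., Y n`. -/
noncomputable def prSeq {𝒴 U : Type*} [MeasurableSpace U] (k : 𝒴 → U → ℝ) (ν : Measure U)
    (w : ℕ → ℝ) (p0 : U → ℝ) (Y : ℕ → 𝒴) : ℕ → U → ℝ
  | 0 => p0
  | n + 1 => fun u =>
      (1 - w (n + 1)) * prSeq k ν w p0 Y n u +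
        w (n + 1) * (k (Y (n + 1)) u * prSeq k ν w p0 Y n u /
          ∫ v, k (Y (n + 1)) v * prSeq k ν w p0 Y n v ∂ν)

/-- **Two-observation decomposition of the PR estimate.** For two observations `Y₁, Y₂`, if
`f₀(Y₁) > 0`, `f₁(Y₂) > 0` and `m = ∫ k(Y₁|u) k(Y₂|u) p₀(u) ν(du)` is finite, then the PR
estimate after two steps is the mixture
`p₂ = a₀ p₀ + a₁ p₀(·|Y₁) + a₂ p₀(·|Y₂) + a₁₂ p₀(·|Y₁,Y₂)` of the prior and its one- and
two-observation Bayes updates, with the stated nonnegative coefficients summing to one. -/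
theorem pr_two_observation_decomposition
    {𝒴 U : Type*} [MeasurableSpace 𝒴] [MeasurableSpace U]
    (ν : Measure U) [SigmaFinite ν]
    (k : 𝒴 → U → ℝ)
    (hk_meas : Measurable (Function.uncurry k))
    (hk_nonneg : ∀ y u, 0 ≤ k y u)
    (p0 : U → ℝ) (hp0_meas : Measurable p0) (hp0_nonneg : ∀ u, 0 ≤ p0 u)
    (w : ℕ → ℝ) (hw : ∀ i, 0 < w i ∧ w i < 1)
    (Y : ℕ → 𝒴)
    (hint1 : Integrable (fun u => k (Y 1) u * p0 u) ν)
    (hint2 : Integrable (fun u => k (Y 2) u * p0 u) ν)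
    (hintm : Integrable (fun u => k (Y 1) u * k (Y 2) u * p0 u) ν)
    (hf0Y1 : 0 < ∫ u, k (Y 1) u * p0 u ∂ν)
    (hf0Y2 : 0 < ∫ u, k (Y 2) u * p0 u ∂ν)
    (hm : 0 < ∫ u, k (Y 1) u * k (Y 2) u * p0 u ∂ν)
    (hf1Y2 : 0 < ∫ u, k (Y 2) u * prSeq k ν w p0 Y 1 u ∂ν) :
    let f0 : 𝒴 → ℝ := fun y => ∫ u, k y u * p0 u ∂ν
    let f1 : 𝒴 → ℝ := fun y => ∫ u, k y u * prSeq k ν w p0 Y 1 u ∂ν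
    let m : ℝ := ∫ u, k (Y 1) u * k (Y 2) u * p0 u ∂ν
    let a0 : ℝ := (1 - w 1) * (1 - w 2)
    let a1 : ℝ := w 1 * (1 - w 2)
    let a2 : ℝ := w 2 * (1 - w 1) * f0 (Y 2) / f1 (Y 2)
    let a12 : ℝ := w 1 * w 2 * m / (f0 (Y 1) * f1 (Y 2))
    (∀ u : U,
      prSeq k ν w p0 Y 2 u =
        a0 * p0 u + a1 * (k (Y 1) u * p0 u / f0 (Y 1)) +
          a2 * (k (Y 2) u * p0 u / f0 (Y 2)) +
          a12 * (k (Y 1) u * k (Y 2) u * p0 u / m)) ∧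
    0 ≤ a0 ∧ 0 ≤ a1 ∧ 0 ≤ a2 ∧ 0 ≤ a12 ∧ a0 + a1 + a2 + a12 = 1 := by
  intro f0 f1 m a0 a1 a2 a12
  obtain ⟨hw1pos, hw1lt⟩ := hw 1
  obtain ⟨hw2pos, hw2lt⟩ := hw 2
  have hp1 : ∀ u, prSeq k ν w p0 Y 1 u
      = (1 - w 1) * p0 u + w 1 * (k (Y 1) u * p0 u / f0 (Y 1)) := by
    intro u; simp [prSeq, f0]
  have hne1 : f0 (Y 1) ≠ 0 := ne_of_gt hf0Y1
  have hne2 : f0 (Y 2) ≠ 0 := ne_of_gt hf0Y2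
  have hnem : m ≠ 0 := ne_of_gt hm
  have hneF : f1 (Y 2) ≠ 0 := ne_of_gt hf1Y2
  have hg : (fun u => k (Y 2) u * prSeq k ν w p0 Y 1 u)
      = fun u => (1 - w 1) * (k (Y 2) u * p0 u)
        + (w 1 / f0 (Y 1)) * (k (Y 1) u * k (Y 2) u * p0 u) := by
    funext u; rw [hp1]; ring
  have hf1 : f1 (Y 2) = (1 - w 1) * f0 (Y 2) + (w 1 / f0 (Y 1)) * m := by
    show (∫ u, k (Y 2) u * prSeq k ν w p0 Y 1 u ∂ν) = _
    rw [hg, integral_add (hint2.const_mul _) (hintm.const_mul _),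
      integral_const_mul, integral_const_mul]
  refine ⟨?_, ?_, ?_, ?_, ?_, ?_⟩
  · intro u
    have h2 : prSeq k ν w p0 Y 2 u
        = (1 - w 2) * prSeq k ν w p0 Y 1 u
          + w 2 * (k (Y 2) u * prSeq k ν w p0 Y 1 u / f1 (Y 2)) := rfl
    rw [h2, hp1 u]
    simp only [a0, a1, a2, a12]
    field_simp
    ring
  · exact mul_nonneg (by linarith) (by linarith)
  · exact mul_nonneg hw1pos.le (by linarith)
  · exact div_nonneg (mul_nonneg (mul_nonneg hw2pos.le (by linarith)) hf0Y2.le) hf1Y2.le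
  · exact div_nonneg (mul_nonneg (mul_nonneg hw1pos.le hw2pos.le) hm.le)
      (mul_nonneg hf0Y1.le hf1Y2.le)
  · have key : w 2 * (1 - w 1) * f0 (Y 2) / f1 (Y 2)
        + w 1 * w 2 * m / (f0 (Y 1) * f1 (Y 2)) = w 2 := by
      rw [div_add_div _ _ hneF (mul_ne_zero hne1 hneF),
        div_eq_iff (mul_ne_zero hneF (mul_ne_zero hne1 hneF)), hf1]
      field_simp
    have h : (1 - w 1) * (1 - w 2) + w 1 * (1 - w 2) + w 2 = 1 := by ring
    simp only [a0, a1, a2, a12]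
    linarith [key, h]
end

section
/- First-order characterization of the Kullback–Leibler projection: let U be a compact metric space, f* a probability density w.r.t. a sigma-finite measure mu, and u -> k(y|u) bounded and continuous for mu-a.e. y, with sup_{u1,u2 in U} Integral (k(y|u1)/k(y|u2))^2 f*(y) mu(dy) < infinity. If the probability measure P-dagger on U minimizes P -> K(f*, f_P) over all probability measures on U, with K(f*, f_{P-dagger}) < infinity and f_{P-dagger}(y) > 0 for f*-a.e. y, then Integral (k(y|u) / f_{P-dagger}(y)) f*(y) mu(dy) <= 1 for every u in U, and Integral (k(y|u) / f_{P-dagger}(y)) f*(y) mu(dy) = 1 for P-dagger-almost every u. -/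
open MeasureTheory Filter Topology ENNReal
open scoped Classical

/-- Kullback–Leibler divergence `K(f, g) = ∫ f log(f/g) dμ` between two densities `f, g`
with respect to `μ`, with the convention that it equals `∞` when the absolute-continuity
or integrability requirements fail. -/
noncomputable def KLdiv {𝒴 : Type*} [MeasurableSpace 𝒴] (μ : Measure 𝒴) (f g : 𝒴 → ℝ) : ℝ≥0∞ :=
  if (∀ᵐ y ∂μ, g y = 0 → f y = 0) ∧ Integrable (fun y => f y * Real.log (f y / g y)) μ
  then ENNReal.ofReal (∫ y, f y * Real.log (f y / g y) ∂μ)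
  else ∞

section Aux

variable {𝒴 : Type*} [MeasurableSpace 𝒴] {μ : Measure 𝒴}

/-- KLdiv only depends on the a.e. class of the second argument. -/
lemma KLdiv_congr_ae {f g₁ g₂ : 𝒴 → ℝ} (h : g₁ =ᵐ[μ] g₂) :
    KLdiv μ f g₁ = KLdiv μ f g₂ := by
  have h1 : ((∀ᵐ y ∂μ, g₁ y = 0 → f y = 0) ∧
      Integrable (fun y => f y * Real.log (f y / g₁ y)) μ) ↔
      ((∀ᵐ y ∂μ, g₂ y = 0 → f y = 0) ∧
      Integrable (fun y => f y * Real.log (f y / g₂ y)) μ) := by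
    constructor
    · rintro ⟨h1, h2⟩
      refine ⟨?_, ?_⟩
      · filter_upwards [h, h1] with y hy h1y
        rw [← hy]; exact h1y
      · refine (integrable_congr ?_).1 h2
        filter_upwards [h] with y hy
        rw [hy]
    · rintro ⟨h1, h2⟩
      refine ⟨?_, ?_⟩
      · filter_upwards [h, h1] with y hy h1y
        rw [hy]; exact h1y
      · refine (integrable_congr ?_).2 h2
        filter_upwards [h] with y hy
        rw [hy]
  have h2 : ∫ y, f y * Real.log (f y / g₁ y) ∂μ = ∫ y, f y * Real.log (f y / g₂ y) ∂μ := by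
    refine integral_congr_ae ?_
    filter_upwards [h] with y hy
    rw [hy]
  unfold KLdiv
  split_ifs with hc1 hc2 hc2
  · rw [h2]
  · exact absurd (h1.1 hc1) hc2
  · exact absurd (h1.2 hc2) hc1
  · rfl

/-- Nonnegativity of the KL integrand's integral for (sub)probability densities. -/
lemma kl_integral_nonneg {f g : 𝒴 → ℝ}
    (hf_nonneg : ∀ y, 0 ≤ f y) (hg_nonneg : ∀ y, 0 ≤ g y)
    (hf_int : Integrable f μ) (hg_int : Integrable g μ)
    (hfg : ∫ y, g y ∂μ ≤ ∫ y, f y ∂μ)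
    (habs : ∀ᵐ y ∂μ, g y = 0 → f y = 0)
    (hint : Integrable (fun y => f y * Real.log (f y / g y)) μ) :
    0 ≤ ∫ y, f y * Real.log (f y / g y) ∂μ := by
  have key : ∀ᵐ y ∂μ, f y - g y ≤ f y * Real.log (f y / g y) := by
    filter_upwards [habs] with y hy
    rcases eq_or_lt_of_le (hf_nonneg y) with h0 | h0
    · rcases eq_or_lt_of_le (hg_nonneg y) with hg0 | hg0
      · simp [← h0, ← hg0]
      · simp only [← h0, zero_mul, zero_sub]
        linarith
    · have hg0 : 0 < g y := by
        rcases eq_or_lt_of_le (hg_nonneg y) with hg0 | hg0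
        · exact absurd (hy hg0.symm) (by linarith)
        · exact hg0
      have hlog : Real.log (g y / f y) ≤ g y / f y - 1 :=
        Real.log_le_sub_one_of_pos (by positivity)
      have hrw : Real.log (f y / g y) = - Real.log (g y / f y) := by
        rw [Real.log_div hg0.ne' h0.ne', Real.log_div h0.ne' hg0.ne']; ring
      rw [hrw]
      have h2 : f y * Real.log (g y / f y) ≤ f y * (g y / f y - 1) :=
        mul_le_mul_of_nonneg_left hlog h0.le
      have h3 : f y * (g y / f y - 1) = g y - f y := by
        field_simp
      nlinarith
  have h1 : ∫ y, (f y - g y) ∂μ ≤ ∫ y, f y * Real.log (f y / g y) ∂μ :=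
    integral_mono_ae (hf_int.sub hg_int) hint key
  rw [integral_sub hf_int hg_int] at h1
  linarith

/-- A measurable nonnegative function with Bochner integral 1 is integrable. -/
lemma integrable_of_integral_eq_one {f : 𝒴 → ℝ} (h : ∫ y, f y ∂μ = 1) :
    Integrable f μ := by
  by_contra hc
  rw [integral_undef hc] at h
  norm_num at h

/-- Integrability with respect to a Dirac measure. -/
lemma integrable_dirac' {α : Type*} [MeasurableSpace α] {f : α → ℝ} (hf : Measurable f)
    (a : α) : Integrable f (Measure.dirac a) := by
  refine ⟨hf.aestronglyMeasurable, ?_⟩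
  rw [HasFiniteIntegral, lintegral_dirac' _ (hf.enorm)]
  exact enorm_lt_top

/-- Concavity of the logarithm: slopes from 1 are antitone. -/
lemma log_slope_anti {c s t : ℝ} (hs : 0 < s) (hst : s ≤ t) (hc : 0 < 1 + t * c) :
    Real.log (1 + t * c) / t ≤ Real.log (1 + s * c) / s := by
  have ht : 0 < t := hs.trans_le hst
  have hab : s / t + (1 - s / t) = 1 := by ring
  have ha : 0 ≤ s / t := by positivity
  have hb : 0 ≤ 1 - s / t := by
    have : s / t ≤ 1 := (div_le_one ht).2 hst
    linarith
  have key := (strictConcaveOn_log_Ioi.concaveOn).2 (Set.mem_Ioi.2 hc)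
    (Set.mem_Ioi.2 one_pos) ha hb hab
  simp only [smul_eq_mul, Real.log_one, mul_zero, add_zero, mul_one] at key
  have hrw : s / t * (1 + t * c) + (1 - s / t) = 1 + s * c := by
    field_simp; ring
  rw [hrw] at key
  rw [div_le_div_iff₀ ht hs]
  have := mul_le_mul_of_nonneg_left key ht.le
  calc Real.log (1 + t * c) * s = t * (s / t * Real.log (1 + t * c)) := by
        field_simp
    _ ≤ t * Real.log (1 + s * c) := by
        refine mul_le_mul_of_nonneg_left key ht.le
    _ = Real.log (1 + s * c) * t := by ring

/-- The slope of the logarithm at 1 tends to the derivative. -/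
lemma log_slope_tendsto (c : ℝ) {t : ℕ → ℝ} (ht0 : ∀ n, t n ≠ 0)
    (htlim : Tendsto t atTop (𝓝 0)) :
    Tendsto (fun n => Real.log (1 + t n * c) / t n) atTop (𝓝 c) := by
  have hg : HasDerivAt (fun x : ℝ => Real.log (1 + x * c)) c 0 := by
    have h1 : HasDerivAt (fun x : ℝ => 1 + x * c) c 0 := by
      simpa using ((hasDerivAt_id (0:ℝ)).mul_const c).const_add 1
    have h2 := (Real.hasDerivAt_log (by norm_num : (1:ℝ) + 0 * c ≠ 0)).comp 0 h1
    simp only [zero_mul, add_zero, inv_one, one_mul] at h2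
    exact h2
  have hslope := hasDerivAt_iff_tendsto_slope.1 hg
  have hseq : Tendsto t atTop (𝓝[≠] (0:ℝ)) := by
    refine tendsto_nhdsWithin_iff.2 ⟨htlim, ?_⟩
    filter_upwards with n
    exact ht0 n
  have := hslope.comp hseq
  refine this.congr fun n => ?_
  simp only [Function.comp_apply, slope_def_field]
  rw [div_eq_div_iff (sub_ne_zero.2 ?_) (ht0 n)]
  · simp [mul_comm]
  · exact ht0 n

end Aux

/-- Perturbation step: mixing in a small amount of `g` cannot decrease the KL value,
hence the directional derivative integral is nonpositive. -/
lemma KL_perturb {𝒴 : Type*} [MeasurableSpace 𝒴] {μ : Measure 𝒴}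
    {fstar F g : 𝒴 → ℝ}
    (hf_meas : Measurable fstar) (hf_nonneg : ∀ y, 0 ≤ fstar y)
    (hf_int : Integrable fstar μ) (hf_dens : ∫ y, fstar y ∂μ = 1)
    (hF_meas : Measurable F) (hF_nonneg : ∀ y, 0 ≤ F y)
    (hF_int : Integrable F μ)
    (hg_meas : Measurable g) (hg_nonneg : ∀ y, 0 ≤ g y)
    (hg_int : Integrable g μ) (hg_dens : ∫ y, g y ∂μ = 1)
    (hFpos : ∀ᵐ y ∂μ, fstar y ≠ 0 → 0 < F y)
    (hAint : Integrable (fun y => fstar y * Real.log (fstar y / F y)) μ)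
    {t : ℝ} (ht0 : 0 < t) (ht1 : t < 1)
    (hft_dens : ∫ y, ((1 - t) * F y + t * g y) ∂μ = 1)
    (hmin : ENNReal.ofReal (∫ y, fstar y * Real.log (fstar y / F y) ∂μ) ≤
      KLdiv μ fstar (fun y => (1 - t) * F y + t * g y)) :
    Integrable (fun y => fstar y * Real.log (((1 - t) * F y + t * g y) / F y)) μ ∧
    ∫ y, fstar y * Real.log (((1 - t) * F y + t * g y) / F y) ∂μ ≤ 0 := by
  set ft : 𝒴 → ℝ := fun y => (1 - t) * F y + t * g y with hft_def
  set L : 𝒴 → ℝ := fun y => fstar y * Real.log (ft y / F y) with hL_def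
  have hft_nonneg : ∀ y, 0 ≤ ft y := fun y => by
    have h1 := hF_nonneg y; have h2 := hg_nonneg y; simp only [hft_def]; nlinarith
  have hft_meas : Measurable ft := (hF_meas.const_mul _).add (hg_meas.const_mul _)
  have hft_int : Integrable ft μ := (hF_int.const_mul _).add (hg_int.const_mul _)
  have hL_meas : Measurable L :=
    hf_meas.mul ((hft_meas.div hF_meas).log)
  have hL_int : Integrable L μ := by
    refine Integrable.mono'
      (((hf_int.const_mul (-Real.log (1 - t))).add hAint.norm).add hft_int)
      hL_meas.aestronglyMeasurable ?_
    have hlog1t : Real.log (1 - t) ≤ 0 := Real.log_nonpos (by linarith) (by linarith)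
    filter_upwards [hFpos] with y hy
    simp only [Pi.add_apply]
    set X : ℝ := fstar y * Real.log (fstar y / F y) with hX_def
    have hXn : X ≤ ‖X‖ := Real.le_norm_self X
    have hXnn : (0:ℝ) ≤ ‖X‖ := norm_nonneg X
    have hfty0 := hft_nonneg y
    rcases eq_or_lt_of_le (hf_nonneg y) with h0 | h0
    · have hL0 : L y = 0 := by
        simp only [hL_def, ← h0, zero_mul]
      rw [hL0, norm_zero]
      have h1 := hft_nonneg y
      have h2 : (0:ℝ) ≤ -Real.log (1 - t) * fstar y :=
        mul_nonneg (by linarith) (hf_nonneg y)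
      linarith
    · have hFy : 0 < F y := hy h0.ne'
      have hfty : 0 < ft y := by
        have := hg_nonneg y; simp only [hft_def]; nlinarith
      have hlb : Real.log (1 - t) ≤ Real.log (ft y / F y) := by
        apply Real.log_le_log (by linarith)
        rw [le_div_iff₀ hFy]
        have := hg_nonneg y; simp only [hft_def]; nlinarith
      have hub : L y ≤ X + ft y := by
        have e1 : Real.log (ft y / F y) =
            Real.log (fstar y / F y) + Real.log (ft y / fstar y) := by
          rw [Real.log_div hfty.ne' hFy.ne', Real.log_div h0.ne' hFy.ne',
            Real.log_div hfty.ne' h0.ne']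
          ring
        have e2 : Real.log (ft y / fstar y) ≤ ft y / fstar y - 1 :=
          Real.log_le_sub_one_of_pos (by positivity)
        have e3 : fstar y * Real.log (ft y / fstar y) ≤ ft y - fstar y := by
          have h4 := mul_le_mul_of_nonneg_left e2 h0.le
          have h5 : fstar y * (ft y / fstar y - 1) = ft y - fstar y := by
            field_simp
          linarith [h4, h5.le]
        have e4 : L y = X + fstar y * Real.log (ft y / fstar y) := by
          simp only [hL_def, hX_def]; rw [e1]; ring
        have := hf_nonneg y
        clear_value X ft L
        linarith
      have hlb2 : Real.log (1 - t) * fstar y ≤ L y := by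
        have := mul_le_mul_of_nonneg_left hlb h0.le
        simp only [hL_def]; linarith
      rw [Real.norm_eq_abs, abs_le]
      have h7 := hft_nonneg y
      have h8 : (0:ℝ) ≤ -Real.log (1 - t) * fstar y :=
        mul_nonneg (by linarith) (hf_nonneg y)
      clear_value X ft L
      constructor
      · nlinarith
      · linarith
  have hsub : ∀ᵐ y ∂μ, fstar y * Real.log (fstar y / ft y) =
      fstar y * Real.log (fstar y / F y) - L y := by
    filter_upwards [hFpos] with y hy
    rcases eq_or_lt_of_le (hf_nonneg y) with h0 | h0
    · simp only [hL_def, ← h0, zero_mul]; ring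
    · have hFy : 0 < F y := hy h0.ne'
      have hfty : 0 < ft y := by
        have := hg_nonneg y; simp only [hft_def]; nlinarith
      simp only [hL_def]
      rw [Real.log_div h0.ne' hfty.ne', Real.log_div h0.ne' hFy.ne',
        Real.log_div hfty.ne' hFy.ne']
      ring
  have hint2 : Integrable (fun y => fstar y * Real.log (fstar y / ft y)) μ :=
    (integrable_congr hsub).2 (hAint.sub hL_int)
  have habs2 : ∀ᵐ y ∂μ, ft y = 0 → fstar y = 0 := by
    filter_upwards [hFpos] with y hy hft0
    by_contra hf0
    have hFy : 0 < F y := hy hf0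
    have : 0 < ft y := by
      have := hg_nonneg y; simp only [hft_def]; nlinarith
    exact this.ne' hft0
  have hKLt : KLdiv μ fstar ft =
      ENNReal.ofReal ((∫ y, fstar y * Real.log (fstar y / F y) ∂μ) - ∫ y, L y ∂μ) := by
    rw [KLdiv, if_pos ⟨habs2, hint2⟩, integral_congr_ae hsub,
      integral_sub hAint hL_int]
  rw [hKLt] at hmin
  have hApos : 0 ≤ (∫ y, fstar y * Real.log (fstar y / F y) ∂μ) - ∫ y, L y ∂μ := by
    have h9 := kl_integral_nonneg hf_nonneg hft_nonneg hf_int hft_int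
      (by rw [hf_dens, hft_dens]) habs2 hint2
    rwa [integral_congr_ae hsub, integral_sub hAint hL_int] at h9
  have hDle : ∫ y, L y ∂μ ≤ 0 := by
    have := (ENNReal.ofReal_le_ofReal_iff hApos).1 hmin
    linarith
  exact ⟨hL_int, hDle⟩

/-- From nonpositivity of all perturbation integrals, deduce `∫ f⋆ g/F ≤ 1`. -/
lemma key_step {𝒴 : Type*} [MeasurableSpace 𝒴] {μ : Measure 𝒴}
    {fstar F g : 𝒴 → ℝ}
    (hf_meas : Measurable fstar) (hf_nonneg : ∀ y, 0 ≤ fstar y)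
    (hf_int : Integrable fstar μ) (hf_dens : ∫ y, fstar y ∂μ = 1)
    (hF_meas : Measurable F) (hF_nonneg : ∀ y, 0 ≤ F y)
    (hg_meas : Measurable g) (hg_nonneg : ∀ y, 0 ≤ g y)
    (hFpos : ∀ᵐ y ∂μ, fstar y ≠ 0 → 0 < F y)
    (hD : ∀ t : ℝ, 0 < t → t < 1 →
      Integrable (fun y => fstar y * Real.log (((1 - t) * F y + t * g y) / F y)) μ ∧
      ∫ y, fstar y * Real.log (((1 - t) * F y + t * g y) / F y) ∂μ ≤ 0) :
    Integrable (fun y => fstar y * (g y / F y)) μ ∧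
    ∫ y, fstar y * (g y / F y) ∂μ ≤ 1 := by
  -- the sequence of mixture weights
  set ts : ℕ → ℝ := fun n => 1 / ((n : ℝ) + 2) with hts_def
  have hts_pos : ∀ n, 0 < ts n := fun n => by positivity
  have hts_lt1 : ∀ n, ts n < 1 := fun n => by
    rw [hts_def]
    rw [div_lt_one (by positivity)]
    have : (0:ℝ) ≤ (n:ℝ) := Nat.cast_nonneg n
    linarith
  have hts_anti : Antitone ts := by
    intro n m hnm
    simp only [hts_def]
    apply one_div_le_one_div_of_le (by positivity)
    have : (n:ℝ) ≤ (m:ℝ) := Nat.cast_le.2 hnm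
    linarith
  have hts_lim : Tendsto ts atTop (𝓝 0) := by
    have h2 : Tendsto (fun n : ℕ => ((n : ℝ) + 2)) atTop atTop :=
      tendsto_atTop_add_const_right atTop 2 tendsto_natCast_atTop_atTop
    have h3 := h2.inv_tendsto_atTop
    simp only [hts_def, one_div]
    exact h3.congr fun n => rfl
  -- abbreviations
  set r : 𝒴 → ℝ := fun y => g y / F y with hr_def
  have hr_nonneg : ∀ y, 0 ≤ r y := fun y => div_nonneg (hg_nonneg y) (hF_nonneg y)
  have hr_meas : Measurable r := hg_meas.div hF_meas
  set c : 𝒴 → ℝ := fun y => r y - 1 with hc_def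
  have hc_meas : Measurable c := hr_meas.sub measurable_const
  set H : ℕ → 𝒴 → ℝ := fun n y => fstar y * (Real.log (1 + ts n * c y) / ts n)
    with hH_def
  have hH_meas : ∀ n, Measurable (H n) := fun n =>
    hf_meas.mul ((Real.measurable_log.comp ((hc_meas.const_mul (ts n)).const_add 1)).div_const (ts n))
  -- relation with the perturbation integrand
  have hHL : ∀ n, H n =ᵐ[μ]
      fun y => (1 / ts n) * (fstar y * Real.log (((1 - ts n) * F y + ts n * g y) / F y)) := by
    intro n
    filter_upwards [hFpos] with y hy
    rcases eq_or_lt_of_le (hf_nonneg y) with h0 | h0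
    · simp only [hH_def, ← h0, zero_mul, mul_zero]
    · have hFy : 0 < F y := hy h0.ne'
      have e : ((1 - ts n) * F y + ts n * g y) / F y = 1 + ts n * c y := by
        simp only [hc_def, hr_def]
        field_simp
        ring
      simp only [hH_def, e]
      ring
  have hH_int : ∀ n, Integrable (H n) μ := fun n =>
    (integrable_congr (hHL n)).2 (((hD (ts n) (hts_pos n) (hts_lt1 n)).1).const_mul _)
  have hH_le : ∀ n, ∫ y, H n y ∂μ ≤ 0 := by
    intro n
    rw [integral_congr_ae (hHL n), integral_const_mul]
    have h1 := (hD (ts n) (hts_pos n) (hts_lt1 n)).2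
    have h2 : (0:ℝ) < 1 / ts n := by positivity
    exact mul_nonpos_of_nonneg_of_nonpos h2.le h1
  -- pointwise facts
  have hH_mono : ∀ᵐ y ∂μ, Monotone fun n => H n y := by
    filter_upwards [hFpos] with y hy
    intro n m hnm
    rcases eq_or_lt_of_le (hf_nonneg y) with h0 | h0
    · simp only [hH_def, ← h0, zero_mul]; exact le_refl _
    · have hFy : 0 < F y := hy h0.ne'
      have hc1 : -1 ≤ c y := by
        simp only [hc_def]
        have := hr_nonneg y
        linarith
      have hpos1 : 0 < 1 + ts n * c y := by
        rcases le_or_gt 0 (c y) with h | h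
        · nlinarith [hts_pos n]
        · nlinarith [hts_pos n, hts_lt1 n]
      simp only [hH_def]
      exact mul_le_mul_of_nonneg_left
        (log_slope_anti (hts_pos m) (hts_anti hnm) hpos1) h0.le
  have hH_tend : ∀ᵐ y ∂μ, Tendsto (fun n => H n y) atTop (𝓝 (fstar y * c y)) := by
    filter_upwards [hFpos] with y hy
    rcases eq_or_lt_of_le (hf_nonneg y) with h0 | h0
    · simp only [hH_def, ← h0, zero_mul]
      exact tendsto_const_nhds
    · simp only [hH_def]
      exact (log_slope_tendsto (c y) (fun n => (hts_pos n).ne') hts_lim).const_mul (fstar y)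
  have hH_le_c : ∀ᵐ y ∂μ, ∀ n, H n y ≤ fstar y * c y := by
    filter_upwards [hFpos] with y hy n
    rcases eq_or_lt_of_le (hf_nonneg y) with h0 | h0
    · simp only [hH_def, ← h0, zero_mul]; exact le_refl _
    · have hFy : 0 < F y := hy h0.ne'
      have hc1 : -1 ≤ c y := by
        simp only [hc_def]
        have := hr_nonneg y
        linarith
      have hpos1 : 0 < 1 + ts n * c y := by
        rcases le_or_gt 0 (c y) with h | h
        · nlinarith [hts_pos n]
        · nlinarith [hts_pos n, hts_lt1 n]
      have hlog := Real.log_le_sub_one_of_pos hpos1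
      have hdiv : Real.log (1 + ts n * c y) / ts n ≤ c y := by
        rw [div_le_iff₀ (hts_pos n)]
        nlinarith
      simp only [hH_def]
      exact mul_le_mul_of_nonneg_left hdiv h0.le
  -- Pass 1 : integrability of fstar * r via monotone convergence in ℝ≥0∞
  have hG_meas : ∀ n : ℕ, AEMeasurable (fun y => ENNReal.ofReal (H n y - H 0 y)) μ :=
    fun n => ((hH_meas n).sub (hH_meas 0)).ennreal_ofReal.aemeasurable
  have hG_mono : ∀ᵐ y ∂μ, Monotone fun n => ENNReal.ofReal (H n y - H 0 y) := by
    filter_upwards [hH_mono] with y hy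
    intro n m hnm
    exact ENNReal.ofReal_le_ofReal (by have := hy hnm; linarith)
  have hG_tend : ∀ᵐ y ∂μ, Tendsto (fun n => ENNReal.ofReal (H n y - H 0 y)) atTop
      (𝓝 (ENNReal.ofReal (fstar y * c y - H 0 y))) := by
    filter_upwards [hH_tend] with y hy
    exact (ENNReal.continuous_ofReal.tendsto _).comp (hy.sub tendsto_const_nhds)
  have hGlim := lintegral_tendsto_of_tendsto_of_monotone hG_meas hG_mono hG_tend
  have hGn_le : ∀ n, ∫⁻ y, ENNReal.ofReal (H n y - H 0 y) ∂μ ≤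
      ENNReal.ofReal (- ∫ y, H 0 y ∂μ) := by
    intro n
    have hint_sub : Integrable (fun y => H n y - H 0 y) μ := (hH_int n).sub (hH_int 0)
    rw [← ofReal_integral_eq_lintegral_ofReal hint_sub ?_]
    · apply ENNReal.ofReal_le_ofReal
      rw [integral_sub (hH_int n) (hH_int 0)]
      have h1 := hH_le n
      linarith
    · filter_upwards [hH_mono] with y hy
      exact sub_nonneg.2 (hy (Nat.zero_le n))
  have hψ_lt : ∫⁻ y, ENNReal.ofReal (fstar y * c y - H 0 y) ∂μ < ∞ :=
    lt_of_le_of_lt (le_of_tendsto' hGlim hGn_le) ofReal_lt_top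
  have hH0_lt : ∫⁻ y, ENNReal.ofReal (H 0 y) ∂μ < ∞ := by
    refine lt_of_le_of_lt (lintegral_mono fun y => ?_) (hH_int 0).2
    rw [← ofReal_norm]
    exact ENNReal.ofReal_le_ofReal (Real.le_norm_self _)
  have hf_lt : ∫⁻ y, ENNReal.ofReal (fstar y) ∂μ < ∞ := by
    refine lt_of_le_of_lt (lintegral_mono fun y => ?_) hf_int.2
    rw [← ofReal_norm]
    exact ENNReal.ofReal_le_ofReal (Real.le_norm_self _)
  have hfr_meas : Measurable fun y => fstar y * r y := hf_meas.mul hr_meas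
  have hfr_lint : ∫⁻ y, ENNReal.ofReal (fstar y * r y) ∂μ < ∞ := by
    have hpt : ∀ y, ENNReal.ofReal (fstar y * r y) ≤
        ENNReal.ofReal (fstar y * c y - H 0 y) +
          (ENNReal.ofReal (H 0 y) + ENNReal.ofReal (fstar y)) := by
      intro y
      have e : fstar y * r y = (fstar y * c y - H 0 y) + (H 0 y + fstar y) := by
        simp only [hc_def]
        ring
      rw [e]
      exact (ENNReal.ofReal_add_le).trans (add_le_add le_rfl ENNReal.ofReal_add_le)
    calc ∫⁻ y, ENNReal.ofReal (fstar y * r y) ∂μ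
        ≤ ∫⁻ y, (ENNReal.ofReal (fstar y * c y - H 0 y) +
          (ENNReal.ofReal (H 0 y) + ENNReal.ofReal (fstar y))) ∂μ := lintegral_mono hpt
      _ = (∫⁻ y, ENNReal.ofReal (fstar y * c y - H 0 y) ∂μ) +
          ((∫⁻ y, ENNReal.ofReal (H 0 y) ∂μ) + ∫⁻ y, ENNReal.ofReal (fstar y) ∂μ) := by
          rw [lintegral_add_left (show Measurable fun y => ENNReal.ofReal (fstar y * c y - H 0 y) from
              ((hf_meas.mul hc_meas).sub (hH_meas 0)).ennreal_ofReal),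
            lintegral_add_left ((hH_meas 0).ennreal_ofReal)]
      _ < ∞ := by
          exact ENNReal.add_lt_top.2 ⟨hψ_lt, ENNReal.add_lt_top.2 ⟨hH0_lt, hf_lt⟩⟩
  have hfr_int : Integrable (fun y => fstar y * r y) μ := by
    refine ⟨hfr_meas.aestronglyMeasurable, ?_⟩
    rw [hasFiniteIntegral_iff_norm]
    refine lt_of_le_of_lt (lintegral_mono fun y => ?_) hfr_lint
    rw [Real.norm_of_nonneg (mul_nonneg (hf_nonneg y) (hr_nonneg y))]
  -- Pass 2 : dominated convergence
  have hdom : Tendsto (fun n => ∫ y, H n y ∂μ) atTop (𝓝 (∫ y, fstar y * c y ∂μ)) := by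
    refine tendsto_integral_of_dominated_convergence
      (fun y => ‖H 0 y‖ + (fstar y * r y + fstar y))
      (fun n => (hH_meas n).aestronglyMeasurable)
      (((hH_int 0).norm).add (hfr_int.add hf_int)) ?_ hH_tend
    intro n
    filter_upwards [hH_mono, hH_le_c] with y h1 h2
    rw [Real.norm_eq_abs, abs_le]
    have h3 : H 0 y ≤ H n y := h1 (Nat.zero_le n)
    have h4 := h2 n
    have h5 : fstar y * c y = fstar y * r y - fstar y := by
      simp only [hc_def]; ring
    have h6 : -‖H 0 y‖ ≤ H 0 y := by
      have := Real.le_norm_self (-(H 0 y))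
      rw [norm_neg] at this
      linarith
    have h7 : 0 ≤ fstar y * r y := mul_nonneg (hf_nonneg y) (hr_nonneg y)
    have h8 : 0 ≤ fstar y := hf_nonneg y
    have h9 : 0 ≤ ‖H 0 y‖ := norm_nonneg _
    constructor
    · linarith
    · linarith
  have hlim_le : ∫ y, fstar y * c y ∂μ ≤ 0 := le_of_tendsto' hdom hH_le
  have heq : ∫ y, fstar y * c y ∂μ = ∫ y, fstar y * r y ∂μ - 1 := by
    have e : (fun y => fstar y * c y) = fun y => fstar y * r y - fstar y := by
      funext y; simp only [hc_def]; ring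
    rw [e, integral_sub hfr_int hf_int, hf_dens]
  refine ⟨hfr_int, ?_⟩
  show ∫ y, fstar y * r y ∂μ ≤ 1
  linarith

/-- **First-order characterization of the Kullback–Leibler projection.** If `P†` minimizes
`P ↦ K(f⋆, f_P)` over probability measures on the compact metric space `U`, with
`K(f⋆, f_{P†}) < ∞` and `f_{P†} > 0` `f⋆`-a.e., then
`∫ (k(y|u)/f_{P†}(y)) f⋆(y) μ(dy) ≤ 1` for every `u`, with equality for `P†`-almost every
`u`. -/
theorem kl_projection_first_order
    {𝒴 : Type*} [MeasurableSpace 𝒴]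
    {U : Type*} [MetricSpace U] [CompactSpace U] [MeasurableSpace U] [BorelSpace U]
    (μ : Measure 𝒴) [SigmaFinite μ]
    (k : 𝒴 → U → ℝ)
    (hk_meas : Measurable (Function.uncurry k))
    (hk_nonneg : ∀ y u, 0 ≤ k y u)
    (hk_dens : ∀ u, ∫ y, k y u ∂μ = 1)
    (hk_cont : ∀ᵐ y ∂μ, Continuous (fun u => k y u) ∧ ∃ C : ℝ, ∀ u, k y u ≤ C)
    (fstar : 𝒴 → ℝ)
    (hf_meas : Measurable fstar) (hf_nonneg : ∀ y, 0 ≤ fstar y)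
    (hf_dens : ∫ y, fstar y ∂μ = 1)
    (hratio : ∃ C : ℝ≥0∞, C ≠ ∞ ∧ ∀ u1 u2 : U,
      ∫⁻ y, ENNReal.ofReal ((k y u1 / k y u2) ^ 2 * fstar y) ∂μ ≤ C)
    (Pdag : ProbabilityMeasure U)
    (hmin : ∀ Q : ProbabilityMeasure U,
      KLdiv μ fstar (fun y => ∫ u, k y u ∂(Pdag : Measure U)) ≤
        KLdiv μ fstar (fun y => ∫ u, k y u ∂(Q : Measure U)))
    (hfin : KLdiv μ fstar (fun y => ∫ u, k y u ∂(Pdag : Measure U)) ≠ ∞)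
    (hpos : ∀ᵐ y ∂(μ.withDensity fun y => ENNReal.ofReal (fstar y)),
      0 < ∫ u, k y u ∂(Pdag : Measure U)) :
    (∀ u : U,
      ∫⁻ y, ENNReal.ofReal (k y u / (∫ v, k y v ∂(Pdag : Measure U)) * fstar y) ∂μ ≤ 1) ∧
    (∀ᵐ u ∂(Pdag : Measure U),
      ∫⁻ y, ENNReal.ofReal (k y u / (∫ v, k y v ∂(Pdag : Measure U)) * fstar y) ∂μ = 1) := by
  set F : 𝒴 → ℝ := fun y => ∫ u, k y u ∂(Pdag : Measure U) with hF_def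
  have hFy_eq : ∀ y, (∫ v, k y v ∂(Pdag : Measure U)) = F y := fun y => rfl
  simp only [hFy_eq] at hpos ⊢
  -- basic measurability
  have hky_meas : ∀ u, Measurable fun y => k y u := fun u =>
    hk_meas.comp (measurable_id.prodMk measurable_const)
  have hku_meas : ∀ y, Measurable fun u => k y u := fun y =>
    hk_meas.comp (measurable_const.prodMk measurable_id)
  have hF_meas : Measurable F :=
    (hk_meas.stronglyMeasurable.integral_prod_right' (ν := (Pdag : Measure U))).measurable
  have hF_nonneg : ∀ y, 0 ≤ F y := fun y => integral_nonneg fun u => hk_nonneg y u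
  have hf_int : Integrable fstar μ := MeasureTheory.integrable_of_integral_eq_one hf_dens
  have hk_int : ∀ u, Integrable (fun y => k y u) μ := fun u =>
    MeasureTheory.integrable_of_integral_eq_one (hk_dens u)
  have hkP_int : ∀ᵐ y ∂μ, Integrable (fun u => k y u) (Pdag : Measure U) := by
    filter_upwards [hk_cont] with y hy
    obtain ⟨-, C, hC⟩ := hy
    refine Integrable.mono' (integrable_const C) (hku_meas y).aestronglyMeasurable ?_
    filter_upwards with u
    rw [Real.norm_of_nonneg (hk_nonneg y u)]
    exact hC u
  -- positivity of F on the support of fstar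
  have hFpos : ∀ᵐ y ∂μ, fstar y ≠ 0 → 0 < F y := by
    have h1 := (ae_withDensity_iff (p := fun y => 0 < F y) hf_meas.ennreal_ofReal).1 hpos
    filter_upwards [h1] with y hy hne
    apply hy
    rw [ne_eq, ENNReal.ofReal_eq_zero, not_le]
    exact lt_of_le_of_ne (hf_nonneg y) (Ne.symm hne)
  -- unfold the finiteness assumption
  by_cases hcint : (∀ᵐ y ∂μ, F y = 0 → fstar y = 0) ∧
      Integrable (fun y => fstar y * Real.log (fstar y / F y)) μ
  swap
  · exact absurd (by rw [KLdiv, if_neg hcint]) hfin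
  obtain ⟨hcond, hAint⟩ := hcint
  have hKLP : KLdiv μ fstar F = ENNReal.ofReal (∫ y, fstar y * Real.log (fstar y / F y) ∂μ) := by
    rw [KLdiv, if_pos ⟨hcond, hAint⟩]
  -- F is a probability density
  have hF_lint : ∫⁻ y, ENNReal.ofReal (F y) ∂μ = 1 := by
    have h1 : ∫⁻ y, ENNReal.ofReal (F y) ∂μ =
        ∫⁻ y, ∫⁻ u, ENNReal.ofReal (k y u) ∂(Pdag : Measure U) ∂μ := by
      refine lintegral_congr_ae ?_
      filter_upwards [hkP_int] with y hy
      rw [← ofReal_integral_eq_lintegral_ofReal hy (ae_of_all _ fun u => hk_nonneg y u)]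
    have h2 : ∫⁻ y, ∫⁻ u, ENNReal.ofReal (k y u) ∂(Pdag : Measure U) ∂μ =
        ∫⁻ u, ∫⁻ y, ENNReal.ofReal (k y u) ∂μ ∂(Pdag : Measure U) :=
      lintegral_lintegral_swap (hk_meas.ennreal_ofReal.aemeasurable)
    have h3 : ∀ u, ∫⁻ y, ENNReal.ofReal (k y u) ∂μ = 1 := fun u => by
      rw [← ofReal_integral_eq_lintegral_ofReal (hk_int u)
        (ae_of_all _ fun y => hk_nonneg y u), hk_dens u, ofReal_one]
    rw [h1, h2]
    simp only [h3, lintegral_one, measure_univ]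
  have hF_int : Integrable F μ := by
    refine ⟨hF_meas.aestronglyMeasurable, ?_⟩
    rw [hasFiniteIntegral_iff_norm]
    have : ∫⁻ y, ENNReal.ofReal ‖F y‖ ∂μ = 1 := by
      rw [← hF_lint]
      exact lintegral_congr fun y => by rw [Real.norm_of_nonneg (hF_nonneg y)]
    rw [this]
    exact one_lt_top
  have hF_dens : ∫ y, F y ∂μ = 1 := by
    have h1 := ofReal_integral_eq_lintegral_ofReal hF_int (ae_of_all _ hF_nonneg)
    rw [hF_lint] at h1
    exact ENNReal.ofReal_eq_one.1 h1
  -- the key first-order bound, via mixing with Dirac measures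
  have key : ∀ u0 : U, Integrable (fun y => fstar y * (k y u0 / F y)) μ ∧
      ∫ y, fstar y * (k y u0 / F y) ∂μ ≤ 1 := by
    intro u0
    refine key_step hf_meas hf_nonneg hf_int hf_dens hF_meas hF_nonneg
      (hky_meas u0) (fun y => hk_nonneg y u0) hFpos ?_
    intro t ht0 ht1
    have hft_dens : ∫ y, ((1 - t) * F y + t * k y u0) ∂μ = 1 := by
      rw [integral_add ((hF_int.const_mul _)) ((hk_int u0).const_mul _),
        integral_const_mul, integral_const_mul, hF_dens, hk_dens]
      ring
    refine KL_perturb hf_meas hf_nonneg hf_int hf_dens hF_meas hF_nonneg hF_int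
      (hky_meas u0) (fun y => hk_nonneg y u0) (hk_int u0) (hk_dens u0)
      hFpos hAint ht0 ht1 hft_dens ?_
    -- construct the mixture as a probability measure
    have hprob : IsProbabilityMeasure
        (ENNReal.ofReal (1 - t) • (Pdag : Measure U) + ENNReal.ofReal t • Measure.dirac u0) := by
      constructor
      simp only [Measure.add_apply, Measure.smul_apply, measure_univ, smul_eq_mul, mul_one]
      rw [← ENNReal.ofReal_add (by linarith) (by linarith)]
      norm_num
    set Q : ProbabilityMeasure U :=
      ⟨ENNReal.ofReal (1 - t) • (Pdag : Measure U) + ENNReal.ofReal t • Measure.dirac u0,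
        hprob⟩ with hQ_def
    have hQdens : (fun y => ∫ u, k y u ∂(Q : Measure U)) =ᵐ[μ]
        fun y => (1 - t) * F y + t * k y u0 := by
      filter_upwards [hkP_int] with y hy
      have hd1 : Integrable (fun u => k y u) (ENNReal.ofReal (1 - t) • (Pdag : Measure U)) :=
        hy.smul_measure ofReal_ne_top
      have hd2 : Integrable (fun u => k y u) (ENNReal.ofReal t • Measure.dirac u0) :=
        (integrable_dirac' (hku_meas y) u0).smul_measure ofReal_ne_top
      show ∫ u, k y u ∂(ENNReal.ofReal (1 - t) • (Pdag : Measure U) +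
        ENNReal.ofReal t • Measure.dirac u0) = (1 - t) * F y + t * k y u0
      rw [integral_add_measure hd1 hd2, integral_smul_measure, integral_smul_measure,
        integral_dirac' _ _ (hku_meas y).stronglyMeasurable,
        ENNReal.toReal_ofReal (by linarith), ENNReal.toReal_ofReal (by linarith)]
      simp only [smul_eq_mul, hF_def]
    have hm := hmin Q
    rw [KLdiv_congr_ae hQdens, hKLP] at hm
    exact hm
  -- Part 1
  have part1 : ∀ u : U, ∫⁻ y, ENNReal.ofReal (k y u / F y * fstar y) ∂μ ≤ 1 := by
    intro u
    obtain ⟨hint, hle⟩ := key u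
    have heq : ∫⁻ y, ENNReal.ofReal (k y u / F y * fstar y) ∂μ =
        ENNReal.ofReal (∫ y, fstar y * (k y u / F y) ∂μ) := by
      rw [ofReal_integral_eq_lintegral_ofReal hint (ae_of_all _ fun y =>
        mul_nonneg (hf_nonneg y) (div_nonneg (hk_nonneg y u) (hF_nonneg y)))]
      exact lintegral_congr fun y => by rw [mul_comm]
    rw [heq]
    calc ENNReal.ofReal (∫ y, fstar y * (k y u / F y) ∂μ) ≤ ENNReal.ofReal 1 :=
        ENNReal.ofReal_le_ofReal hle
      _ = 1 := ofReal_one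
  refine ⟨part1, ?_⟩
  -- Part 2
  set I : U → ℝ≥0∞ := fun u => ∫⁻ y, ENNReal.ofReal (k y u / F y * fstar y) ∂μ with hI_def
  have hI_meas : Measurable I := by
    have hm : Measurable fun p : U × 𝒴 => ENNReal.ofReal (k p.2 p.1 / F p.2 * fstar p.2) :=
      (((hk_meas.comp measurable_swap).div (hF_meas.comp measurable_snd)).mul
        (hf_meas.comp measurable_snd)).ennreal_ofReal
    exact hm.lintegral_prod_right'
  have hIint : ∫⁻ u, I u ∂(Pdag : Measure U) = 1 := by
    have hswap : ∫⁻ u, ∫⁻ y, ENNReal.ofReal (k y u / F y * fstar y) ∂μ ∂(Pdag : Measure U) =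
        ∫⁻ y, ∫⁻ u, ENNReal.ofReal (k y u / F y * fstar y) ∂(Pdag : Measure U) ∂μ :=
      lintegral_lintegral_swap ((((hk_meas.comp measurable_swap).div
        (hF_meas.comp measurable_snd)).mul (hf_meas.comp measurable_snd)).ennreal_ofReal).aemeasurable
    have hinner : ∀ᵐ y ∂μ, (∫⁻ u, ENNReal.ofReal (k y u / F y * fstar y) ∂(Pdag : Measure U)) =
        ENNReal.ofReal (fstar y) := by
      filter_upwards [hkP_int, hFpos] with y h1 h2
      rcases eq_or_lt_of_le (hf_nonneg y) with h0 | h0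
      · simp [← h0]
      · have hFy : 0 < F y := h2 h0.ne'
        have e : ∀ u, ENNReal.ofReal (k y u / F y * fstar y) =
            ENNReal.ofReal (k y u) * ENNReal.ofReal (fstar y / F y) := by
          intro u
          rw [← ENNReal.ofReal_mul (hk_nonneg y u)]
          congr 1
          field_simp
        simp_rw [e]
        rw [lintegral_mul_const'' _ ((hku_meas y).ennreal_ofReal.aemeasurable),
          ← ofReal_integral_eq_lintegral_ofReal h1 (ae_of_all _ fun u => hk_nonneg y u),
          ← ENNReal.ofReal_mul (integral_nonneg fun u => hk_nonneg y u)]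
        congr 1
        rw [hFy_eq]
        field_simp
    rw [hI_def, hswap, lintegral_congr_ae hinner,
      ← ofReal_integral_eq_lintegral_ofReal hf_int (ae_of_all _ hf_nonneg), hf_dens, ofReal_one]
  have hzero : ∫⁻ u, (1 - I u) ∂(Pdag : Measure U) = 0 := by
    rw [lintegral_sub hI_meas (by rw [hIint]; exact one_ne_top) (ae_of_all _ part1),
      lintegral_one, measure_univ, hIint, tsub_self]
  have hae := (lintegral_eq_zero_iff (measurable_const.sub hI_meas)).1 hzero
  filter_upwards [hae] with u hu
  have h1 : (1:ℝ≥0∞) - I u = 0 := hu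
  exact le_antisymm (part1 u) (tsub_eq_zero_iff_le.1 h1)
end

section
/- Gradient characterization of the nonparametric maximum likelihood estimator of a mixing distribution: given observations Y_1, ..., Y_n and a kernel k, if the probability measure P-hat on U maximizes P -> Sum_{i=1}^n log f_P(Y_i) over all probability measures P on a compact metric space U, where u -> k(y|u) is continuous and bounded for each y, and f_{P-hat}(Y_i) > 0 for all i, then (1/n) Sum_{i=1}^n k(Y_i|u) / f_{P-hat}(Y_i) <= 1 for every u in U, with equality for P-hat-almost every u. -/
open MeasureTheory Filter Topology ENNReal

/-- Elementary logarithm lower bound: for `|x| ≤ 1/2`, `x - 2x² ≤ log (1+x)`. -/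
lemma npmle_log_aux {x : ℝ} (hx : |x| ≤ 1/2) : x - 2*x^2 ≤ Real.log (1+x) := by
  have hx1 : -(1/2 : ℝ) ≤ x := neg_le_of_abs_le hx
  have hx2 : x ≤ 1/2 := le_of_abs_le hx
  have h1x : (0:ℝ) < 1 + x := by linarith
  have hinv : Real.log (1+x)⁻¹ ≤ (1+x)⁻¹ - 1 :=
    Real.log_le_sub_one_of_pos (by positivity)
  rw [Real.log_inv] at hinv
  have hmul : (1+x) * (1+x)⁻¹ = 1 := mul_inv_cancel₀ (ne_of_gt h1x)
  nlinarith [sq_nonneg x, mul_pos h1x (inv_pos.mpr h1x)]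

/-- **Gradient characterization of the nonparametric MLE of a mixing distribution.** If the
probability measure `P̂` on a compact metric space `U` maximizes the mixture log-likelihood
`P ↦ ∑_{i=1}^n log f_P(Yᵢ)`, where `u ↦ k(y|u)` is continuous and bounded for each `y`, and
`f_{P̂}(Yᵢ) > 0` for all `i`, then `(1/n) ∑_{i=1}^n k(Yᵢ|u) / f_{P̂}(Yᵢ) ≤ 1` for every `u`,
with equality for `P̂`-almost every `u`. -/
theorem npmle_gradient_characterization
    {𝒴 : Type*} [MeasurableSpace 𝒴]
    {U : Type*} [MetricSpace U] [CompactSpace U] [MeasurableSpace U] [BorelSpace U]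
    (k : 𝒴 → U → ℝ)
    (hk_meas : Measurable (Function.uncurry k))
    (hk_nonneg : ∀ y u, 0 ≤ k y u)
    (hk_cont : ∀ y, Continuous (fun u => k y u))
    (hk_bdd : ∀ y, ∃ C : ℝ, ∀ u, k y u ≤ C)
    (n : ℕ) (hn : 0 < n) (Y : Fin n → 𝒴)
    (Phat : ProbabilityMeasure U)
    (hmax : ∀ Q : ProbabilityMeasure U,
      ∑ i, Real.log (∫ u, k (Y i) u ∂(Q : Measure U)) ≤
        ∑ i, Real.log (∫ u, k (Y i) u ∂(Phat : Measure U)))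
    (hpos : ∀ i, 0 < ∫ u, k (Y i) u ∂(Phat : Measure U)) :
    (∀ u : U,
      (1 / (n : ℝ)) * ∑ i, k (Y i) u / (∫ v, k (Y i) v ∂(Phat : Measure U)) ≤ 1) ∧
    (∀ᵐ u ∂(Phat : Measure U),
      (1 / (n : ℝ)) * ∑ i, k (Y i) u / (∫ v, k (Y i) v ∂(Phat : Measure U)) = 1) := by
  classical
  set f : Fin n → ℝ := fun i => ∫ v, k (Y i) v ∂(Phat : Measure U) with hfdef
  have hfpos : ∀ i, 0 < f i := hpos
  -- integrability of each kernel slice w.r.t. any finite measure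
  have hint : ∀ (i : Fin n) (μ : Measure U) [IsFiniteMeasure μ],
      Integrable (fun v => k (Y i) v) μ := by
    intro i μ _
    obtain ⟨C, hC⟩ := hk_bdd (Y i)
    exact (integrable_const C).mono' ((hk_cont (Y i)).aestronglyMeasurable)
      (ae_of_all _ fun v => by
        rw [Real.norm_eq_abs, abs_of_nonneg (hk_nonneg _ _)]; exact hC v)
  -- key pointwise inequality
  have key : ∀ u : U, ∑ i, k (Y i) u / f i ≤ (n : ℝ) := by
    intro u
    set a : Fin n → ℝ := fun i => k (Y i) u / f i - 1 with hadef
    clear_value a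
    have hA : ∀ i, -1 ≤ a i := by
      intro i
      have : 0 ≤ k (Y i) u / f i := div_nonneg (hk_nonneg _ _) (hfpos i).le
      simp only [hadef]; linarith
    have hsum_eq : ∑ i, k (Y i) u / f i = ∑ i, a i + (n : ℝ) := by
      simp only [hadef, Finset.sum_sub_distrib, Finset.sum_const, Finset.card_univ,
        Fintype.card_fin, nsmul_eq_mul, mul_one]
      ring
    suffices hsum : ∑ i, a i ≤ 0 by rw [hsum_eq]; linarith
    -- the log-likelihood comparison along the path towards δ_u
    have hlog : ∀ t : ℝ, 0 < t → t < 1 → ∑ i, Real.log (1 + t * a i) ≤ 0 := by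
      intro t ht0 ht1
      have h1t : (0:ℝ) ≤ 1 - t := by linarith
      set μt : Measure U :=
        ENNReal.ofReal t • Measure.dirac u + ENNReal.ofReal (1-t) • (Phat : Measure U)
        with hμt
      have hprob : IsProbabilityMeasure μt := by
        constructor
        show (ENNReal.ofReal t • Measure.dirac u
            + ENNReal.ofReal (1-t) • (Phat : Measure U)) Set.univ = 1
        rw [Measure.add_apply, Measure.smul_apply, Measure.smul_apply, measure_univ,
          measure_univ, smul_eq_mul, smul_eq_mul, mul_one, mul_one,
          ← ENNReal.ofReal_add ht0.le h1t]
        norm_num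
      have h1ta : ∀ i, 0 < 1 + t * a i := by
        intro i
        have := hA i
        nlinarith
      let Q : ProbabilityMeasure U := ⟨μt, hprob⟩
      have hQint : ∀ i, ∫ v, k (Y i) v ∂(Q : Measure U) = f i * (1 + t * a i) := by
        intro i
        have hd : Integrable (fun v => k (Y i) v) (ENNReal.ofReal t • Measure.dirac u) :=
          (hint i (Measure.dirac u)).smul_measure ENNReal.ofReal_ne_top
        have hp : Integrable (fun v => k (Y i) v)
            (ENNReal.ofReal (1-t) • (Phat : Measure U)) :=
          (hint i (Phat : Measure U)).smul_measure ENNReal.ofReal_ne_top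
        show ∫ v, k (Y i) v ∂μt = _
        rw [hμt, integral_add_measure hd hp, integral_smul_measure, integral_smul_measure,
          integral_dirac' _ _ ((hk_cont (Y i)).stronglyMeasurable),
          ENNReal.toReal_ofReal ht0.le, ENNReal.toReal_ofReal h1t]
        have hfi : f i ≠ 0 := (hfpos i).ne'
        simp only [smul_eq_mul, hadef]
        field_simp
        ring
      have hmaxQ := hmax Q
      have hrw : ∀ i, Real.log (∫ v, k (Y i) v ∂(Q : Measure U)) =
          Real.log (f i) + Real.log (1 + t * a i) := by
        intro i
        rw [hQint i, Real.log_mul (ne_of_gt (hfpos i)) (ne_of_gt (h1ta i))]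
      calc ∑ i, Real.log (1 + t * a i)
          = ∑ i, Real.log (∫ v, k (Y i) v ∂(Q : Measure U)) - ∑ i, Real.log (f i) := by
            simp only [hrw, Finset.sum_add_distrib]; ring
        _ ≤ 0 := by
            have : ∑ i, Real.log (∫ v, k (Y i) v ∂(Phat : Measure U)) = ∑ i, Real.log (f i) := rfl
            linarith [hmaxQ]
    -- ε-argument
    have hfinal : ∀ ε : ℝ, 0 < ε → ∑ i, a i ≤ 0 + ε := by
      intro ε hε
      set M : ℝ := 1 + ∑ i, |a i| with hM
      clear_value M
      have hM1 : 1 ≤ M := by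
        have : (0:ℝ) ≤ ∑ i, |a i| := Finset.sum_nonneg fun i _ => abs_nonneg _
        rw [hM]; linarith
      have hMpos : (0:ℝ) < M := by linarith
      have hMi : ∀ i, |a i| ≤ M := by
        intro i
        have h1 : |a i| ≤ ∑ j, |a j| :=
          Finset.single_le_sum (fun j _ => abs_nonneg (a j)) (Finset.mem_univ i)
        rw [hM]; linarith
      set S2 : ℝ := ∑ i, (a i)^2 with hS2
      clear_value S2
      have hS2nn : 0 ≤ S2 := hS2 ▸ Finset.sum_nonneg fun i _ => sq_nonneg _
      set t : ℝ := min (1/(2*M)) (ε / (2*S2+1)) with htdef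
      have ht0 : 0 < t :=
        lt_min (div_pos one_pos (by linarith)) (div_pos hε (by linarith))
      have htM : t ≤ 1/(2*M) := min_le_left _ _
      have htε : t ≤ ε / (2*S2+1) := min_le_right _ _
      clear_value t
      have ht1 : t < 1 := lt_of_le_of_lt htM (by
        rw [div_lt_one (by linarith)]; linarith)
      have habs : ∀ i, |t * a i| ≤ 1/2 := by
        intro i
        rw [abs_mul, abs_of_pos ht0]
        calc t * |a i| ≤ (1/(2*M)) * M :=
              mul_le_mul htM (hMi i) (abs_nonneg _) (by positivity)
          _ = 1/2 := by field_simp; try ring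
      have hlb : ∀ i, t * a i - 2*(t * a i)^2 ≤ Real.log (1 + t * a i) :=
        fun i => npmle_log_aux (habs i)
      have hexp : t * (∑ i, a i) - 2*t^2 * S2 = ∑ i, (t * a i - 2*(t*a i)^2) := by
        rw [hS2, Finset.mul_sum, Finset.mul_sum, ← Finset.sum_sub_distrib]
        exact Finset.sum_congr rfl fun i _ => by ring
      have hsum2 : t * (∑ i, a i) - 2*t^2 * S2 ≤ ∑ i, Real.log (1 + t * a i) := by
        rw [hexp]; exact Finset.sum_le_sum fun i _ => hlb i
      have hle := hlog t ht0 ht1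
      have hkey : t * (∑ i, a i) ≤ 2*t^2 * S2 := by linarith
      have hdiv : ∑ i, a i ≤ 2*t*S2 := by
        have h' : t * (∑ i, a i) ≤ t * (2*t*S2) := by nlinarith
        exact le_of_mul_le_mul_left h' ht0
      have h2S : (0:ℝ) < 2*S2+1 := by linarith
      have hεt : t * (2*S2+1) ≤ ε := (le_div_iff₀ h2S).mp htε
      nlinarith
    have := le_of_forall_pos_le_add hfinal
    linarith
  -- first conjunct
  have hnpos : (0:ℝ) < n := Nat.cast_pos.mpr hn
  have part1 : ∀ u : U,
      (1 / (n : ℝ)) * ∑ i, k (Y i) u / (∫ v, k (Y i) v ∂(Phat : Measure U)) ≤ 1 := by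
    intro u
    have := key u
    calc (1 / (n : ℝ)) * ∑ i, k (Y i) u / f i ≤ (1 / (n : ℝ)) * n := by
          apply mul_le_mul_of_nonneg_left this (by positivity)
      _ = 1 := by field_simp
  refine ⟨part1, ?_⟩
  -- second conjunct: a.e. equality
  set g : U → ℝ := fun u => ∑ i, k (Y i) u / f i with hgdef
  have hgint : Integrable g (Phat : Measure U) := by
    apply integrable_finset_sum
    intro i _
    exact (hint i (Phat : Measure U)).div_const (f i)
  have hgint_eq : ∫ u, g u ∂(Phat : Measure U) = (n : ℝ) := by
    rw [hgdef]
    rw [integral_finset_sum _ (fun i _ => (hint i (Phat : Measure U)).div_const (f i))]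
    have : ∀ i : Fin n, ∫ u, k (Y i) u / f i ∂(Phat : Measure U) = 1 := by
      intro i
      rw [integral_div]
      exact div_self (ne_of_gt (hfpos i))
    simp [this]
  have hzero : ∫ u, ((n : ℝ) - g u) ∂(Phat : Measure U) = 0 := by
    rw [integral_sub (integrable_const _) hgint, hgint_eq, integral_const]
    simp
  have hae : (fun u => (n : ℝ) - g u) =ᵐ[(Phat : Measure U)] 0 := by
    rw [← integral_eq_zero_iff_of_nonneg]
    · exact hzero
    · intro u
      have := key u
      simp only [Pi.zero_apply, hgdef]
      linarith
    · exact (integrable_const _).sub hgint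
  filter_upwards [hae] with u hu
  simp only [Pi.zero_apply] at hu
  have hgu : g u = n := by linarith
  have : ∑ i, k (Y i) u / (∫ v, k (Y i) v ∂(Phat : Measure U)) = (n : ℝ) := hgu
  rw [this]
  field_simp
end

section
/- Lower semicontinuity of Kullback–Leibler divergence along the mixture class: let U be a compact metric space, f* a probability density with respect to a sigma-finite measure mu on Y, and suppose u -> k(y|u) is bounded and continuous for mu-almost every y. If probability measures P_m on U converge weakly to a probability measure P, then K(f*, f_P) <= liminf_{m -> infinity} K(f*, f_{P_m}). -/
open MeasureTheory Filter Topology ENNReal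
open scoped Classical

/-- Auxiliary pointwise function used to represent the KL divergence as a Lebesgue
integral of a nonnegative integrand. -/
noncomputable def klFun (a b : ℝ) : ℝ≥0∞ :=
  if b = 0 ∧ 0 < a then ∞ else ENNReal.ofReal (a * Real.log (a / b) + b - a)

lemma klAux_nonneg {a b : ℝ} (ha : 0 ≤ a) (hb : 0 < b) :
    0 ≤ a * Real.log (a / b) + b - a := by
  rcases eq_or_lt_of_le ha with h | h
  · simp [← h, hb.le]
  · have h2 : Real.log (a / b) = - Real.log (b / a) := by
      rw [← Real.log_inv]; congr 1; rw [inv_div]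
    rw [h2]
    have h1 : Real.log (b / a) ≤ b / a - 1 := Real.log_le_sub_one_of_pos (by positivity)
    have h3 : a * Real.log (b / a) ≤ a * (b / a - 1) := mul_le_mul_of_nonneg_left h1 ha
    have h4 : a * (b / a - 1) = b - a := by field_simp
    nlinarith

lemma klFun_comp_measurable {𝒴 : Type*} [MeasurableSpace 𝒴] {f g : 𝒴 → ℝ}
    (hf : Measurable f) (hg : Measurable g) :
    Measurable (fun y => klFun (f y) (g y)) := by
  unfold klFun
  refine Measurable.ite ?_ measurable_const ?_
  · exact (hg (measurableSet_singleton 0)).inter (hf measurableSet_Ioi)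
  · exact ENNReal.measurable_ofReal.comp
      (((hf.mul (Real.measurable_log.comp (hf.div hg))).add hg).sub hf)

lemma klFun_liminf_le {a : ℝ} (ha : 0 ≤ a) {b : ℕ → ℝ} {c : ℝ} (hb : ∀ m, 0 ≤ b m)
    (hbc : Tendsto b atTop (𝓝 c)) :
    klFun a c ≤ Filter.liminf (fun m => klFun a (b m)) Filter.atTop := by
  have hc : 0 ≤ c := ge_of_tendsto' hbc hb
  rcases eq_or_lt_of_le hc with hc0 | hcpos
  · rcases eq_or_lt_of_le ha with ha0 | hapos
    · have hz : klFun a c = 0 := by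
        simp [klFun, ← ha0, ← hc0]
      rw [hz]; exact zero_le
    · -- a > 0, c = 0 : the liminf is ⊤
      have htop : Tendsto (fun m => klFun a (b m)) atTop (𝓝 ⊤) := by
        apply ENNReal.tendsto_nhds_top
        intro n
        have hψ : Tendsto (fun x : ℝ => (a * Real.log a - a) + a * (-Real.log x))
            (𝓝[>] (0:ℝ)) atTop := by
          apply tendsto_atTop_add_const_left
          exact Tendsto.const_mul_atTop hapos
            (tendsto_neg_atBot_atTop.comp Real.tendsto_log_nhdsGT_zero)
        have h1 : ∀ᶠ x in 𝓝[>] (0:ℝ), (n:ℝ) < a * Real.log (a / x) + x - a := by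
          filter_upwards [hψ.eventually_gt_atTop (n:ℝ), self_mem_nhdsWithin] with x hx hx0
          have hlog : Real.log (a / x) = Real.log a - Real.log x :=
            Real.log_div hapos.ne' (ne_of_gt hx0)
          rw [hlog]
          have : (0:ℝ) < x := hx0
          nlinarith
        rw [← hc0] at hbc
        filter_upwards [hbc.eventually (eventually_nhdsWithin_iff.mp h1)] with m hm
        rcases eq_or_lt_of_le (hb m) with h0 | h0
        · have : klFun a (b m) = ⊤ := by simp [klFun, ← h0, hapos]
          rw [this]; exact ENNReal.natCast_lt_top n
        · have hlt := hm h0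
          have heq : klFun a (b m) =
              ENNReal.ofReal (a * Real.log (a / b m) + b m - a) := by
            simp [klFun, ne_of_gt h0]
          rw [heq]
          have hn : (n:ℝ≥0∞) = ENNReal.ofReal (n:ℝ) := by simp
          rw [hn]
          exact (ENNReal.ofReal_lt_ofReal_iff
            (lt_of_le_of_lt (Nat.cast_nonneg n) hlt)).mpr hlt
      rw [htop.liminf_eq]
      exact le_top
  · -- c > 0 : klFun a (b m) converges to klFun a c
    have hψcont : ContinuousAt (fun x : ℝ => a * Real.log (a / x) + x - a) c := by
      rcases eq_or_lt_of_le ha with ha0 | hapos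
      · have heq : (fun x : ℝ => a * Real.log (a / x) + x - a) = fun x => x := by
          funext x; simp [← ha0]
        rw [heq]; exact continuousAt_id
      · have h1 : ContinuousAt (fun x : ℝ => a / x) c :=
          continuousAt_const.div continuousAt_id (ne_of_gt hcpos)
        have h2 : ContinuousAt Real.log (a / c) :=
          Real.continuousAt_log (by positivity)
        exact ((continuousAt_const.mul (h2.comp h1)).add continuousAt_id).sub
          continuousAt_const
    have hev : ∀ᶠ m in atTop,
        ENNReal.ofReal (a * Real.log (a / b m) + b m - a) = klFun a (b m) := by
      filter_upwards [hbc.eventually (eventually_gt_nhds (half_lt_self hcpos))] with m hm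
      have hne : b m ≠ 0 := by
        have : (0:ℝ) < b m := lt_trans (by positivity) hm
        exact ne_of_gt this
      simp [klFun, hne]
    have hT : Tendsto (fun m => klFun a (b m)) atTop (𝓝 (klFun a c)) := by
      have hkc : klFun a c = ENNReal.ofReal (a * Real.log (a / c) + c - a) := by
        simp [klFun, ne_of_gt hcpos]
      rw [hkc]
      exact Tendsto.congr' hev
        ((ENNReal.continuous_ofReal.tendsto _).comp (hψcont.tendsto.comp hbc))
    exact le_of_eq hT.liminf_eq.symm

/-- The KL divergence equals the Lebesgue integral of `klFun (f y) (g y)`, for probability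
densities `f, g`. -/
lemma KLdiv_eq_lintegral {𝒴 : Type*} [MeasurableSpace 𝒴] (μ : Measure 𝒴)
    {f g : 𝒴 → ℝ} (hf : Measurable f) (hg : Measurable g)
    (hf0 : ∀ y, 0 ≤ f y) (hg0 : ∀ y, 0 ≤ g y)
    (hfi : Integrable f μ) (hgi : Integrable g μ)
    (hf1 : ∫ y, f y ∂μ = 1) (hg1 : ∫ y, g y ∂μ = 1) :
    KLdiv μ f g = ∫⁻ y, klFun (f y) (g y) ∂μ := by
  set q : 𝒴 → ℝ := fun y => f y * Real.log (f y / g y) + g y - f y with hq_def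
  by_cases hcond : (∀ᵐ y ∂μ, g y = 0 → f y = 0) ∧
      Integrable (fun y => f y * Real.log (f y / g y)) μ
  · -- the if-condition holds
    obtain ⟨hac, hint⟩ := hcond
    have hae : ∀ᵐ y ∂μ, klFun (f y) (g y) = ENNReal.ofReal (q y) := by
      filter_upwards [hac] with y hy
      by_cases h0 : g y = 0
      · have hf0' : f y = 0 := hy h0
        simp [klFun, h0, hf0', hq_def]
      · simp [klFun, h0, hq_def]
    have hq0 : 0 ≤ᵐ[μ] q := by
      filter_upwards [hac] with y hy
      by_cases h0 : g y = 0
      · have hf0' : f y = 0 := hy h0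
        simp [hq_def, h0, hf0']
      · exact klAux_nonneg (hf0 y) (lt_of_le_of_ne (hg0 y) (Ne.symm h0))
    have hqi : Integrable q μ := (hint.add hgi).sub hfi
    have h1 : ∫⁻ y, klFun (f y) (g y) ∂μ = ENNReal.ofReal (∫ y, q y ∂μ) := by
      rw [lintegral_congr_ae hae, ← ofReal_integral_eq_lintegral_ofReal hqi hq0]
    have hsum : Integrable (fun y => f y * Real.log (f y / g y) + g y) μ := hint.add hgi
    have h2 : ∫ y, q y ∂μ = ∫ y, f y * Real.log (f y / g y) ∂μ := by
      have h2' : ∫ y, q y ∂μ =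
          (∫ y, f y * Real.log (f y / g y) ∂μ) + (∫ y, g y ∂μ) - ∫ y, f y ∂μ := by
        simp only [hq_def]
        rw [integral_sub hsum hfi, integral_add hint hgi]
      rw [h2', hf1, hg1]; ring
    rw [h1, h2, KLdiv, if_pos ⟨hac, hint⟩]
  · -- the if-condition fails: both sides are ⊤
    rw [KLdiv, if_neg hcond]
    by_contra hne
    have hfin : ∫⁻ y, klFun (f y) (g y) ∂μ < ⊤ :=
      lt_of_le_of_ne le_top (by simpa [eq_comm] using hne)
    -- absolute continuity
    have hA : μ {y | g y = 0 ∧ 0 < f y} = 0 := by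
      by_contra hA0
      have hsub : ∫⁻ y in {y | g y = 0 ∧ 0 < f y}, klFun (f y) (g y) ∂μ ≤
          ∫⁻ y, klFun (f y) (g y) ∂μ := setLIntegral_le_lintegral _ _
      have hAmeas : MeasurableSet {y | g y = 0 ∧ 0 < f y} :=
        (hg (measurableSet_singleton 0)).inter (hf measurableSet_Ioi)
      have hAeq : ∫⁻ y in {y | g y = 0 ∧ 0 < f y}, klFun (f y) (g y) ∂μ =
          ∫⁻ _ in {y | g y = 0 ∧ 0 < f y}, ⊤ ∂μ := by
        apply setLIntegral_congr_fun hAmeas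
        intro y hy
        simp [klFun, hy.1, hy.2]
      rw [hAeq, setLIntegral_const, ENNReal.top_mul hA0] at hsub
      exact absurd (top_le_iff.mp hsub) (ne_of_lt hfin)
    have hac : ∀ᵐ y ∂μ, g y = 0 → f y = 0 := by
      have : ∀ᵐ y ∂μ, y ∉ {y | g y = 0 ∧ 0 < f y} := by
        rw [ae_iff]; simpa using hA
      filter_upwards [this] with y hy h0
      by_contra hfne
      exact hy ⟨h0, lt_of_le_of_ne (hf0 y) (Ne.symm hfne)⟩
    -- integrability
    have hae : ∀ᵐ y ∂μ, klFun (f y) (g y) = ENNReal.ofReal (q y) := by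
      filter_upwards [hac] with y hy
      by_cases h0 : g y = 0
      · have hf0' : f y = 0 := hy h0
        simp [klFun, h0, hf0', hq_def]
      · simp [klFun, h0, hq_def]
    have hq0 : 0 ≤ᵐ[μ] q := by
      filter_upwards [hac] with y hy
      by_cases h0 : g y = 0
      · have hf0' : f y = 0 := hy h0
        simp [hq_def, h0, hf0']
      · exact klAux_nonneg (hf0 y) (lt_of_le_of_ne (hg0 y) (Ne.symm h0))
    have hq_meas : Measurable q :=
      ((hf.mul (Real.measurable_log.comp (hf.div hg))).add hg).sub hf
    have hqi : Integrable q μ := by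
      refine ⟨hq_meas.aestronglyMeasurable, ?_⟩
      rw [hasFiniteIntegral_iff_norm]
      have : ∫⁻ y, ENNReal.ofReal ‖q y‖ ∂μ = ∫⁻ y, klFun (f y) (g y) ∂μ := by
        apply lintegral_congr_ae
        filter_upwards [hae, hq0] with y hy hy0
        rw [hy, Real.norm_of_nonneg hy0]
      rw [this]; exact hfin
    have hint : Integrable (fun y => f y * Real.log (f y / g y)) μ := by
      have heq : (fun y => f y * Real.log (f y / g y)) = fun y => q y - g y + f y := by
        funext y; simp [hq_def]; ring
      rw [heq]
      exact (hqi.sub hgi).add hfi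
    exact hcond ⟨hac, hint⟩

/-- For a probability measure `Q` on a compact space, the mixture density `y ↦ ∫ k(y|u) dQ`
is a probability density w.r.t. `μ`. -/
lemma mixture_density_int {𝒴 U : Type*} [MeasurableSpace 𝒴] [MetricSpace U] [CompactSpace U]
    [MeasurableSpace U] [BorelSpace U]
    (μ : Measure 𝒴) [SigmaFinite μ] (k : 𝒴 → U → ℝ)
    (hk_meas : Measurable (Function.uncurry k))
    (hk_nonneg : ∀ y u, 0 ≤ k y u)
    (hk_dens : ∀ u, ∫ y, k y u ∂μ = 1)
    (hk_cont : ∀ᵐ y ∂μ, Continuous (fun u => k y u))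
    (Q : Measure U) [IsProbabilityMeasure Q] :
    Integrable (fun y => ∫ u, k y u ∂Q) μ ∧ ∫ y, (∫ u, k y u ∂Q) ∂μ = 1 := by
  have hk_int : ∀ u, Integrable (fun y => k y u) μ := by
    intro u
    by_contra h
    have hd := hk_dens u
    rw [integral_undef h] at hd
    exact one_ne_zero hd.symm
  have gmeas : Measurable (fun y => ∫ u, k y u ∂Q) :=
    hk_meas.stronglyMeasurable.integral_prod_right'.measurable
  have g0 : ∀ y, 0 ≤ ∫ u, k y u ∂Q := fun y => integral_nonneg (hk_nonneg y)
  have hlin : ∫⁻ y, ENNReal.ofReal (∫ u, k y u ∂Q) ∂μ = 1 := by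
    have step1 : ∫⁻ y, ENNReal.ofReal (∫ u, k y u ∂Q) ∂μ =
        ∫⁻ y, ∫⁻ u, ENNReal.ofReal (k y u) ∂Q ∂μ := by
      apply lintegral_congr_ae
      filter_upwards [hk_cont] with y hy
      have hint : Integrable (fun u => k y u) Q :=
        (BoundedContinuousFunction.mkOfCompact ⟨fun u => k y u, hy⟩).integrable Q
      exact ofReal_integral_eq_lintegral_ofReal hint
        (Filter.Eventually.of_forall (hk_nonneg y))
    have step2 : ∫⁻ y, ∫⁻ u, ENNReal.ofReal (k y u) ∂Q ∂μ =
        ∫⁻ u, ∫⁻ y, ENNReal.ofReal (k y u) ∂μ ∂Q := by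
      apply lintegral_lintegral_swap
      exact (ENNReal.measurable_ofReal.comp hk_meas).aemeasurable
    have step3 : ∀ u, ∫⁻ y, ENNReal.ofReal (k y u) ∂μ = 1 := by
      intro u
      rw [← ofReal_integral_eq_lintegral_ofReal (hk_int u)
        (Filter.Eventually.of_forall (fun y => hk_nonneg y u)), hk_dens u,
        ENNReal.ofReal_one]
    rw [step1, step2]
    simp [step3]
  have hgi : Integrable (fun y => ∫ u, k y u ∂Q) μ := by
    refine ⟨gmeas.aestronglyMeasurable, ?_⟩
    rw [hasFiniteIntegral_iff_norm]
    have : ∫⁻ y, ENNReal.ofReal ‖∫ u, k y u ∂Q‖ ∂μ =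
        ∫⁻ y, ENNReal.ofReal (∫ u, k y u ∂Q) ∂μ := by
      apply lintegral_congr_ae
      filter_upwards with y
      rw [Real.norm_of_nonneg (g0 y)]
    rw [this, hlin]; exact one_lt_top
  refine ⟨hgi, ?_⟩
  rw [integral_eq_lintegral_of_nonneg_ae (Filter.Eventually.of_forall g0)
    gmeas.aestronglyMeasurable, hlin]
  simp

/-- **Lower semicontinuity of Kullback–Leibler divergence along the mixture class.** Let `U`
be a compact metric space, `f⋆` a probability density w.r.t. a σ-finite measure `μ`, and
suppose `u ↦ k(y|u)` is bounded and continuous for `μ`-a.e. `y`. If probability measures `Pₘ`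
on `U` converge weakly to `P`, then `K(f⋆, f_P) ≤ liminf_m K(f⋆, f_{Pₘ})`. -/
theorem kl_lower_semicontinuous_mixture
    {𝒴 : Type*} [MeasurableSpace 𝒴]
    {U : Type*} [MetricSpace U] [CompactSpace U] [MeasurableSpace U] [BorelSpace U]
    (μ : Measure 𝒴) [SigmaFinite μ]
    (k : 𝒴 → U → ℝ)
    (hk_meas : Measurable (Function.uncurry k))
    (hk_nonneg : ∀ y u, 0 ≤ k y u)
    (hk_dens : ∀ u, ∫ y, k y u ∂μ = 1)
    (hk_cont : ∀ᵐ y ∂μ, Continuous (fun u => k y u) ∧ ∃ C : ℝ, ∀ u, k y u ≤ C)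
    (fstar : 𝒴 → ℝ)
    (hf_meas : Measurable fstar) (hf_nonneg : ∀ y, 0 ≤ fstar y)
    (hf_dens : ∫ y, fstar y ∂μ = 1)
    (Pm : ℕ → ProbabilityMeasure U) (P : ProbabilityMeasure U)
    (hweak : ∀ g : BoundedContinuousFunction U ℝ,
      Tendsto (fun m => ∫ u, g u ∂(Pm m : Measure U)) atTop
        (𝓝 (∫ u, g u ∂(P : Measure U)))) :
    KLdiv μ fstar (fun y => ∫ u, k y u ∂(P : Measure U)) ≤
      Filter.liminf
        (fun m => KLdiv μ fstar (fun y => ∫ u, k y u ∂(Pm m : Measure U))) atTop := by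
  have hk_cont' : ∀ᵐ y ∂μ, Continuous (fun u => k y u) := by
    filter_upwards [hk_cont] with y hy using hy.1
  have hf_int : Integrable fstar μ := by
    by_contra h
    rw [integral_undef h] at hf_dens
    exact one_ne_zero hf_dens.symm
  have gmeas : ∀ (Q : Measure U), SFinite Q →
      Measurable (fun y => ∫ u, k y u ∂Q) := by
    intro Q _
    exact hk_meas.stronglyMeasurable.integral_prod_right'.measurable
  have g0 : ∀ (Q : Measure U) (y : 𝒴), 0 ≤ ∫ u, k y u ∂Q :=
    fun Q y => integral_nonneg (hk_nonneg y)
  have hP := mixture_density_int μ k hk_meas hk_nonneg hk_dens hk_cont' (P : Measure U)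
  have hPm := fun m =>
    mixture_density_int μ k hk_meas hk_nonneg hk_dens hk_cont' (Pm m : Measure U)
  have hKP := KLdiv_eq_lintegral μ hf_meas (gmeas _ inferInstance) hf_nonneg
    (g0 _) hf_int hP.1 hf_dens hP.2
  have hKPm := fun m => KLdiv_eq_lintegral μ hf_meas (gmeas _ inferInstance) hf_nonneg
    (g0 _) hf_int (hPm m).1 hf_dens (hPm m).2
  -- a.e. pointwise lower semicontinuity
  have key : ∀ᵐ y ∂μ, klFun (fstar y) (∫ u, k y u ∂(P : Measure U)) ≤
      Filter.liminf (fun m => klFun (fstar y) (∫ u, k y u ∂(Pm m : Measure U))) atTop := by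
    filter_upwards [hk_cont'] with y hy
    have htend : Tendsto (fun m => ∫ u, k y u ∂(Pm m : Measure U)) atTop
        (𝓝 (∫ u, k y u ∂(P : Measure U))) := by
      have := hweak (BoundedContinuousFunction.mkOfCompact ⟨fun u => k y u, hy⟩)
      simpa using this
    exact klFun_liminf_le (hf_nonneg y) (fun m => g0 _ y) htend
  calc KLdiv μ fstar (fun y => ∫ u, k y u ∂(P : Measure U))
      = ∫⁻ y, klFun (fstar y) (∫ u, k y u ∂(P : Measure U)) ∂μ := hKP
    _ ≤ ∫⁻ y, Filter.liminf
          (fun m => klFun (fstar y) (∫ u, k y u ∂(Pm m : Measure U))) atTop ∂μ :=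
        lintegral_mono_ae key
    _ ≤ Filter.liminf
          (fun m => ∫⁻ y, klFun (fstar y) (∫ u, k y u ∂(Pm m : Measure U)) ∂μ) atTop :=
        lintegral_liminf_le (fun m =>
          klFun_comp_measurable hf_meas (gmeas _ inferInstance))
    _ = Filter.liminf
          (fun m => KLdiv μ fstar (fun y => ∫ u, k y u ∂(Pm m : Measure U))) atTop :=
        Filter.liminf_congr (Filter.Eventually.of_forall fun m => (hKPm m).symm)
end
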